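/- arXiv:2502.04620 — 2 statements merged into one kernel-verified Lean document; each statement's English description precedes it below -/
import Mathlib

section
/- Hubbard model: fix N ≥ 1 and a connected simple graph G on Fin N, and work with 2N qubits, where qubit i is the spin-up copy and qubit N+i the spin-down copy of lattice site i. Let S_Hub = {→X_iX_j, →Y_iY_j : (i,j) an edge of G} ∪ {→X_{N+i}X_{N+j}, →Y_{N+i}Y_{N+j} : (i,j) an edge of G} ∪ {Z_iZ_{N+i} : i ∈ Fin N} (the Pauli strings of the Jordan–Wigner transform of the Hubbard model on G with hopping t ≠ 0 and interaction U ≠ 0). Then dim g(S_Hub) ≥ 2^(N−1). -/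
open Matrix

attribute [local instance 100] LieRing.ofAssociativeRing

/-- The four 2×2 Pauli matrices: identity, X, Y, Z. -/
noncomputable def pauli : Fin 4 → Matrix (Fin 2) (Fin 2) ℂ
  | 0 => 1
  | 1 => !![0, 1; 1, 0]
  | 2 => !![0, -Complex.I; Complex.I, 0]
  | 3 => !![1, 0; 0, -1]

/-- The matrix of an `n`-qubit Pauli string `p : Fin n → Fin 4`,
the Kronecker product of the `pauli (p i)`. -/
noncomputable def PauliMat {n : ℕ} (p : Fin n → Fin 4) :
    Matrix (Fin n → Fin 2) (Fin n → Fin 2) ℂ :=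
  Matrix.of fun x y => ∏ i, pauli (p i) (x i) (y i)

/-- The Hamiltonian algebra of a set of Pauli strings: the Lie ℝ-subalgebra of the
complex matrices generated by `{I • P(p) : p ∈ S}`. -/
noncomputable def hamAlg {n : ℕ} (S : Set (Fin n → Fin 4)) :
    LieSubalgebra ℝ (Matrix (Fin n → Fin 2) (Fin n → Fin 2) ℂ) :=
  LieSubalgebra.lieSpan ℝ _ ((fun p => Complex.I • PauliMat p) '' S)

/-- The Pauli string `→A_iB_j`: letter `A` at `i`, letter `B` at `j`, `Z` strictly
between `i` and `j`, identity elsewhere. -/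
def ladderString {n : ℕ} (i j : Fin n) (A B : Fin 4) : Fin n → Fin 4 :=
  fun k => if k = i then A else if k = j then B
    else if min i j < k ∧ k < max i j then 3 else 0

/-- The Pauli string `Z_kZ_l`. -/
def zzString {n : ℕ} (k l : Fin n) : Fin n → Fin 4 :=
  fun m => if m = k ∨ m = l then 3 else 0

/-- The Pauli string `Z_k`. -/
def zString {n : ℕ} (k : Fin n) : Fin n → Fin 4 :=
  fun m => if m = k then 3 else 0

/-- A choice of letter: `X` if `c = 0`, `Y` if `c = 1`. -/
def ltr (c : Fin 2) : Fin 4 := if c = 0 then 1 else 2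

/-- The opposite letter: `Y` if `c = 0`, `X` if `c = 1`. -/
def ltrBar (c : Fin 2) : Fin 4 := if c = 0 then 2 else 1

/-- Pauli strings of the Jordan–Wigner transformed hopping terms of one spin species,
with sites embedded via `v : Fin N → Fin (2N)` and hoppings on the edges of `G`. -/
def Sspin {N : ℕ} (G : SimpleGraph (Fin N)) (v : Fin N → Fin (2 * N)) :
    Set (Fin (2 * N) → Fin 4) :=
  {p | ∃ k l : Fin N, G.Adj k l ∧
    (p = ladderString (v k) (v l) 1 1 ∨ p = ladderString (v k) (v l) 2 2)}

/-- Pauli strings of the Jordan–Wigner transformed free fermion model. -/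
def Sfree {N : ℕ} (G : SimpleGraph (Fin N)) (u d : Fin N → Fin (2 * N)) :
    Set (Fin (2 * N) → Fin 4) :=
  Sspin G u ∪ Sspin G d

/-- Pauli strings of the model with a single on-site Coulomb interaction at fermion
site `i0` (interaction term `Z_{u i0} Z_{d i0}`). -/
def Sint {N : ℕ} (G : SimpleGraph (Fin N)) (u d : Fin N → Fin (2 * N)) (i0 : Fin N) :
    Set (Fin (2 * N) → Fin 4) :=
  Sfree G u d ∪ {zzString (u i0) (d i0)}

/-- Pauli strings of the Jordan–Wigner transformed Hubbard model on a graph `G`: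
hopping strings for both spin species and on-site interaction strings
`Z_i Z_{N+i}` for every site `i`. -/
def S_Hub (N : ℕ) (G : SimpleGraph (Fin N)) : Set (Fin (2 * N) → Fin 4) :=
  {p | ∃ i j : Fin N, G.Adj i j ∧
      (p = ladderString (⟨i.val, by have := i.isLt; omega⟩ : Fin (2 * N))
              ⟨j.val, by have := j.isLt; omega⟩ 1 1 ∨
       p = ladderString (⟨i.val, by have := i.isLt; omega⟩ : Fin (2 * N))
              ⟨j.val, by have := j.isLt; omega⟩ 2 2 ∨
       p = ladderString (⟨N + i.val, by have := i.isLt; omega⟩ : Fin (2 * N))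
              ⟨N + j.val, by have := j.isLt; omega⟩ 1 1 ∨
       p = ladderString (⟨N + i.val, by have := i.isLt; omega⟩ : Fin (2 * N))
              ⟨N + j.val, by have := j.isLt; omega⟩ 2 2)} ∪
  {p | ∃ i : Fin N,
      p = zzString (⟨i.val, by have := i.isLt; omega⟩ : Fin (2 * N))
            ⟨N + i.val, by have := i.isLt; omega⟩}

/-!
If two Pauli strings anticommute at exactly one site, their commutator is a nonzero real
multiple of their product string, so the product string lies in any Lie subalgebra containing
both. Fix an edge `ab` of `G`. Commuting the on-site string `Z_a Z_{N+a}` with the spin-up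
hopping `X_a Z⋯Z X_b` gives `Y_a Z⋯Z X_b ⊗ Z_{N+a}`, and the two spin-down hoppings along an
edge `jk` move the factor `Z_{N+j}` to `Z_{N+k}`; by connectivity every `Y_a Z⋯Z X_b ⊗ Z_{N+k}`
lies in the algebra. Commuting with it toggles `k` in the spin-down support `T` of
`X_a Z⋯Z X_b ⊗ ∏_{t ∈ T} Z_{N+t}` (`|T|` even) or `Z_a ⊗ ∏_{t ∈ T} Z_{N+t}` (`|T|` odd), which
gives `2^N` distinct Pauli strings in the algebra; these are linearly independent by trace
orthogonality.
-/
open Complex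

def IsCommProd (a b c : Fin 4) : Prop :=
  (a = 0 ∧ c = b) ∨ (b = 0 ∧ c = a) ∨ (a = b ∧ c = 0)

def IsAnticommProd (a b c : Fin 4) : Prop :=
  a ≠ 0 ∧ b ≠ 0 ∧ c ≠ 0 ∧ a ≠ b ∧ b ≠ c ∧ c ≠ a

instance (a b c : Fin 4) : Decidable (IsAnticommProd a b c) := by
  unfold IsAnticommProd; infer_instance

lemma isCommProd_zero_right (a : Fin 4) : IsCommProd a 0 a := Or.inr (Or.inl ⟨rfl, rfl⟩)

lemma pauli_mul_self (a : Fin 4) : pauli a * pauli a = 1 := by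
  fin_cases a <;> ext i j <;> fin_cases i <;> fin_cases j <;>
    simp [pauli, Matrix.mul_apply, Fin.sum_univ_two]

lemma IsCommProd.pauli_mul {a b c : Fin 4} (h : IsCommProd a b c) :
    pauli a * pauli b = pauli c ∧ pauli b * pauli a = pauli c := by
  have h0 : pauli 0 = 1 := rfl
  rcases h with ⟨rfl, rfl⟩ | ⟨rfl, rfl⟩ | ⟨rfl, rfl⟩ <;> simp [h0, pauli_mul_self]

lemma IsAnticommProd.exists_pauli_mul {a b c : Fin 4} (h : IsAnticommProd a b c) :
    ∃ ε : ℝ, (ε = 1 ∨ ε = -1) ∧ pauli a * pauli b = (ε * I) • pauli c ∧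
      pauli b * pauli a = (-ε * I) • pauli c := by
  obtain ⟨ha, hb, hc, hab, hbc, hca⟩ := h
  fin_cases a <;> fin_cases b <;> fin_cases c <;> simp at ha hb hc hab hbc hca
  all_goals first
    | refine ⟨1, by norm_num, ?_, ?_⟩ <;> ext i j <;> fin_cases i <;> fin_cases j <;>
        simp [pauli] <;> done
    | refine ⟨-1, by norm_num, ?_, ?_⟩ <;> ext i j <;> fin_cases i <;> fin_cases j <;>
        simp [pauli]

lemma trace_pauli_mul_pauli (a b : Fin 4) :
    (pauli a * pauli b).trace = if a = b then 2 else 0 := by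
  fin_cases a <;> fin_cases b <;> simp [pauli, Matrix.trace_fin_two] <;> norm_num

section PauliString

variable {n : ℕ}

lemma PauliMat_mul_PauliMat (p q : Fin n → Fin 4) :
    PauliMat p * PauliMat q =
      Matrix.of fun x y => ∏ i, (pauli (p i) * pauli (q i)) (x i) (y i) := by
  ext x y
  simp only [PauliMat, Matrix.mul_apply, Matrix.of_apply, Finset.prod_univ_sum,
    Fintype.piFinset_univ, Finset.prod_mul_distrib]

lemma PauliMat_mul_PauliMat_eq_smul {p q r : Fin n → Fin 4} (c : Fin n → ℂ)
    (h : ∀ i, pauli (p i) * pauli (q i) = c i • pauli (r i)) :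
    PauliMat p * PauliMat q = (∏ i, c i) • PauliMat r := by
  rw [PauliMat_mul_PauliMat]
  ext x y
  simp only [Matrix.of_apply, h, Matrix.smul_apply, PauliMat, smul_eq_mul,
    Finset.prod_mul_distrib]

lemma trace_PauliMat_mul_PauliMat (p q : Fin n → Fin 4) :
    (PauliMat p * PauliMat q).trace = if p = q then 2 ^ n else 0 := by
  have h : (PauliMat p * PauliMat q).trace = ∏ i, (pauli (p i) * pauli (q i)).trace := by
    simp only [PauliMat_mul_PauliMat, Matrix.trace, Matrix.diag, Matrix.of_apply,
      Finset.prod_univ_sum, Fintype.piFinset_univ]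
  rw [h]
  split_ifs with hpq
  · simp [hpq, trace_pauli_mul_pauli]
  · obtain ⟨i, hi⟩ := Function.ne_iff.mp hpq
    exact Finset.prod_eq_zero (Finset.mem_univ i) (by simp [trace_pauli_mul_pauli, hi])

lemma linearIndependent_PauliMat :
    LinearIndependent ℂ (PauliMat : (Fin n → Fin 4) → _) := by
  rw [linearIndependent_iff']
  intro s g hg p hp
  have h := congrArg (fun M => (PauliMat p * M).trace) hg
  simp only [Finset.mul_sum, Matrix.mul_smul, Matrix.trace_sum, Matrix.trace_smul,
    trace_PauliMat_mul_PauliMat, Matrix.trace_zero, smul_eq_mul, mul_ite,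
    mul_zero, Finset.sum_ite_eq, if_pos hp] at h
  exact (mul_eq_zero.mp h).resolve_right (pow_ne_zero _ two_ne_zero)

lemma linearIndependent_smul_PauliMat :
    LinearIndependent ℝ fun p : Fin n → Fin 4 => I • PauliMat p :=
  (linearIndependent_PauliMat.units_smul fun _ => Units.mk0 I I_ne_zero).restrict_scalars' ℝ

lemma card_le_finrank_of_smul_PauliMat_mem
    (L : LieSubalgebra ℝ (Matrix (Fin n → Fin 2) (Fin n → Fin 2) ℂ)) {ι : Type*} [Fintype ι]
    {f : ι → Fin n → Fin 4} (hf : Function.Injective f) (hL : ∀ i, I • PauliMat (f i) ∈ L) :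
    Fintype.card ι ≤ Module.finrank ℝ L := by
  let v : ι → L := fun i => ⟨_, hL i⟩
  have hv : LinearIndependent ℝ v := .of_comp L.toSubmodule.subtype
    (linearIndependent_smul_PauliMat.comp f hf)
  exact hv.fintype_card_le_finrank

def IsBracketProd (p q r : Fin n → Fin 4) : Prop :=
  ∃ i₀, IsAnticommProd (p i₀) (q i₀) (r i₀) ∧ ∀ i ≠ i₀, IsCommProd (p i) (q i) (r i)

lemma IsBracketProd.lie_eq {p q r : Fin n → Fin 4} (h : IsBracketProd p q r) :
    ∃ t : ℝ, t ≠ 0 ∧ ⁅I • PauliMat p, I • PauliMat q⁆ = t • (I • PauliMat r) := by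
  obtain ⟨i₀, h₀, h₁⟩ := h
  obtain ⟨ε, hε, hpq₀, hqp₀⟩ := h₀.exists_pauli_mul
  have hpq := PauliMat_mul_PauliMat_eq_smul (Function.update 1 i₀ (ε * I)) fun i => by
    rcases eq_or_ne i i₀ with rfl | hi
    · simpa using hpq₀
    · simpa [hi] using (h₁ i hi).pauli_mul.1
  have hqp := PauliMat_mul_PauliMat_eq_smul (Function.update 1 i₀ (-ε * I)) fun i => by
    rcases eq_or_ne i i₀ with rfl | hi
    · simpa using hqp₀
    · simpa [hi] using (h₁ i hi).pauli_mul.2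
  refine ⟨-2 * ε, by rcases hε with rfl | rfl <;> norm_num, ?_⟩
  rw [Ring.lie_def, smul_mul_smul_comm, smul_mul_smul_comm, hpq, hqp, smul_smul, smul_smul,
    ← sub_smul, ← Complex.coe_smul, smul_smul]
  simp only [Finset.prod_update_of_mem (Finset.mem_univ _), Pi.one_apply,
    Finset.prod_const_one, mul_one]
  congr 1
  push_cast
  linear_combination (2 * ε * I) * I_mul_I

lemma LieSubalgebra.smul_PauliMat_mem_of_isBracketProd
    (L : LieSubalgebra ℝ (Matrix (Fin n → Fin 2) (Fin n → Fin 2) ℂ)) {p q r : Fin n → Fin 4}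
    (hp : I • PauliMat p ∈ L) (hq : I • PauliMat q ∈ L) (h : IsBracketProd p q r) :
    I • PauliMat r ∈ L := by
  obtain ⟨t, ht, hpq⟩ := h.lie_eq
  have hr := L.smul_mem t⁻¹ (hpq ▸ L.lie_mem hp hq)
  rwa [smul_smul, inv_mul_cancel₀ ht, one_smul] at hr

lemma smul_PauliMat_mem_hamAlg {S : Set (Fin n → Fin 4)} {p : Fin n → Fin 4} (hp : p ∈ S) :
    I • PauliMat p ∈ hamAlg S :=
  LieSubalgebra.subset_lieSpan ⟨p, hp, rfl⟩

def zSetString (T : Finset (Fin n)) : Fin n → Fin 4 := fun m => if m ∈ T then 3 else 0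

@[simp] lemma zSetString_empty : zSetString (∅ : Finset (Fin n)) = 0 :=
  funext fun _ => if_neg (Finset.notMem_empty _)

lemma zSetString_injective : Function.Injective (zSetString (n := n)) := by
  intro T T' h
  ext m
  have hm := congrFun h m
  by_cases hT : m ∈ T <;> by_cases hT' : m ∈ T' <;> simp_all [zSetString]

lemma isCommProd_zSetString_zString_insert {T : Finset (Fin n)} {k : Fin n} (hk : k ∉ T)
    (m : Fin n) : IsCommProd (zSetString T m) (zString k m) (zSetString (insert k T) m) := by
  unfold IsCommProd zSetString zString
  by_cases hm : m = k
  · subst hm; simp [hk]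
  · by_cases hmT : m ∈ T <;> simp [hm, hmT]

lemma ladderString_comm {i j : Fin n} (hij : i ≠ j) (A B : Fin 4) :
    ladderString i j A B = ladderString j i B A := by
  funext k
  by_cases hki : k = i
  · simp [ladderString, hki, hij]
  · simp [ladderString, hki, min_comm, max_comm]

lemma isBracketProd_zString_ladderString (a b : Fin n) {A A' : Fin 4}
    (h : IsAnticommProd 3 A A') (B : Fin 4) :
    IsBracketProd (zString a) (ladderString a b A B) (ladderString a b A' B) :=
  ⟨a, by simpa [zString, ladderString] using h,
    fun i hi => Or.inl ⟨if_neg hi, by simp [ladderString, hi]⟩⟩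

lemma isBracketProd_ladderString_ladderString (a b : Fin n) {A A' : Fin 4}
    (h : IsAnticommProd A A' 3) (B : Fin 4) :
    IsBracketProd (ladderString a b A B) (ladderString a b A' B) (zString a) :=
  ⟨a, by simpa [zString, ladderString] using h,
    fun i hi => Or.inr (Or.inr ⟨by simp [ladderString, hi], if_neg hi⟩)⟩

end PauliString

section Spin

variable {N : ℕ}

def spinUp (i : Fin N) : Fin (2 * N) := ⟨i, by omega⟩

def spinDown (i : Fin N) : Fin (2 * N) := ⟨N + i, by omega⟩

def spinString (p q : Fin N → Fin 4) : Fin (2 * N) → Fin 4 :=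
  fun m => if h : (m : ℕ) < N then p ⟨m, h⟩ else q ⟨m - N, by omega⟩

@[simp] lemma spinString_spinUp (p q : Fin N → Fin 4) (i : Fin N) :
    spinString p q (spinUp i) = p i := by
  simp [spinString, spinUp]

@[simp] lemma spinString_spinDown (p q : Fin N → Fin 4) (i : Fin N) :
    spinString p q (spinDown i) = q i := by
  simp [spinString, spinDown]

lemma exists_eq_spinUp_or_spinDown (m : Fin (2 * N)) :
    (∃ i, m = spinUp i) ∨ ∃ i, m = spinDown i := by
  by_cases h : (m : ℕ) < N
  · exact Or.inl ⟨⟨m, h⟩, rfl⟩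
  · exact Or.inr ⟨⟨m - N, by omega⟩, Fin.ext (by simp [spinDown]; omega)⟩

lemma spinString_injective_right (p p' : Fin N → Fin 4) {q q' : Fin N → Fin 4}
    (h : spinString p q = spinString p' q') : q = q' :=
  funext fun i => by simpa using congrFun h (spinDown i)

lemma IsBracketProd.spinString_left {p p' r q q' r' : Fin N → Fin 4} (h : IsBracketProd p p' r)
    (h' : ∀ i, IsCommProd (q i) (q' i) (r' i)) :
    IsBracketProd (spinString p q) (spinString p' q') (spinString r r') := by
  obtain ⟨i₀, h₀, h₁⟩ := h
  refine ⟨spinUp i₀, by simpa using h₀, fun m hm => ?_⟩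
  rcases exists_eq_spinUp_or_spinDown m with ⟨i, rfl⟩ | ⟨i, rfl⟩
  · simpa using h₁ i (by rintro rfl; exact hm rfl)
  · simpa using h' i

lemma IsBracketProd.spinString_right {p p' r q q' r' : Fin N → Fin 4}
    (h : ∀ i, IsCommProd (p i) (p' i) (r i)) (h' : IsBracketProd q q' r') :
    IsBracketProd (spinString p q) (spinString p' q') (spinString r r') := by
  obtain ⟨i₀, h₀, h₁⟩ := h'
  refine ⟨spinDown i₀, by simpa using h₀, fun m hm => ?_⟩
  rcases exists_eq_spinUp_or_spinDown m with ⟨i, rfl⟩ | ⟨i, rfl⟩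
  · simpa using h i
  · simpa using h₁ i (by rintro rfl; exact hm rfl)

lemma spinString_ladderString_zero (i j : Fin N) (A B : Fin 4) :
    spinString (ladderString i j A B) 0 = ladderString (spinUp i) (spinUp j) A B := by
  funext m
  simp only [spinString, ladderString, spinUp, Fin.ext_iff, Fin.lt_def, Fin.coe_min,
    Fin.coe_max, Pi.zero_apply]
  split_ifs <;> first | rfl | omega

lemma spinString_zero_ladderString (i j : Fin N) (A B : Fin 4) :
    spinString 0 (ladderString i j A B) = ladderString (spinDown i) (spinDown j) A B := by
  funext m
  simp only [spinString, ladderString, spinDown, Fin.ext_iff, Fin.lt_def, Fin.coe_min,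
    Fin.coe_max, Pi.zero_apply]
  split_ifs <;> first | rfl | omega

lemma spinString_zString_zString (i : Fin N) :
    spinString (zString i) (zString i) = zzString (spinUp i) (spinDown i) := by
  funext m
  simp only [spinString, zString, zzString, spinUp, spinDown, Fin.ext_iff]
  split_ifs <;> first | rfl | omega

end Spin

section Hubbard

variable {N : ℕ} {G : SimpleGraph (Fin N)}

lemma spinString_ladderString_zero_mem_S_Hub {a b : Fin N} (hab : G.Adj a b) :
    spinString (ladderString a b 1 1) 0 ∈ S_Hub N G := by
  rw [spinString_ladderString_zero]
  exact Set.mem_union_left _ ⟨a, b, hab, Or.inl rfl⟩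

lemma spinString_zero_ladderString_mem_S_Hub {j k : Fin N} (hjk : G.Adj j k) {A : Fin 4}
    (hA : A = 1 ∨ A = 2) : spinString 0 (ladderString j k A A) ∈ S_Hub N G := by
  rw [spinString_zero_ladderString]
  rcases hA with rfl | rfl
  exacts [Set.mem_union_left _ ⟨j, k, hjk, Or.inr (Or.inr (Or.inl rfl))⟩,
    Set.mem_union_left _ ⟨j, k, hjk, Or.inr (Or.inr (Or.inr rfl))⟩]

lemma spinString_zString_zString_mem_S_Hub (i : Fin N) :
    spinString (zString i) (zString i) ∈ S_Hub N G := by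
  rw [spinString_zString_zString]
  exact Set.mem_union_right _ ⟨i, rfl⟩

lemma smul_PauliMat_spinString_ladderString_zString_mem (hG : G.Connected) {a b : Fin N} (hab : G.Adj a b)
    (k : Fin N) :
    I • PauliMat (spinString (ladderString a b 2 1) (zString k)) ∈ hamAlg (S_Hub N G) := by
  set L := hamAlg (S_Hub N G)
  have base : I • PauliMat (spinString (ladderString a b 2 1) (zString a)) ∈ L :=
    L.smul_PauliMat_mem_of_isBracketProd
      (smul_PauliMat_mem_hamAlg (spinString_zString_zString_mem_S_Hub a))
      (smul_PauliMat_mem_hamAlg (spinString_ladderString_zero_mem_S_Hub hab))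
      ((isBracketProd_zString_ladderString a b (by decide) 1).spinString_left
        fun _ => isCommProd_zero_right _)
  have step : ∀ j k, G.Adj j k →
      I • PauliMat (spinString (ladderString a b 2 1) (zString j)) ∈ L →
      I • PauliMat (spinString (ladderString a b 2 1) (zString k)) ∈ L := by
    intro j k hjk hj
    have hjk' : I • PauliMat (spinString (ladderString a b 2 1) (ladderString j k 2 1)) ∈ L :=
      L.smul_PauliMat_mem_of_isBracketProd hj
        (smul_PauliMat_mem_hamAlg (spinString_zero_ladderString_mem_S_Hub hjk (Or.inl rfl)))
        (IsBracketProd.spinString_right (fun _ => isCommProd_zero_right _)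
          (isBracketProd_zString_ladderString j k (by decide) 1))
    refine L.smul_PauliMat_mem_of_isBracketProd hjk'
      (smul_PauliMat_mem_hamAlg (spinString_zero_ladderString_mem_S_Hub hjk (Or.inr rfl)))
      (IsBracketProd.spinString_right (fun _ => isCommProd_zero_right _) ?_)
    rw [ladderString_comm hjk.ne, ladderString_comm hjk.ne]
    exact isBracketProd_ladderString_ladderString k j (by decide) 2
  induction (SimpleGraph.reachable_iff_reflTransGen a k).mp (hG.preconnected a k) with
  | refl => exact base
  | tail _ hjk ih => exact step _ _ hjk ih

def hubbardString (a b : Fin N) (T : Finset (Fin N)) : Fin (2 * N) → Fin 4 :=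
  spinString (if Even T.card then ladderString a b 1 1 else zString a) (zSetString T)

lemma hubbardString_injective (a b : Fin N) : Function.Injective (hubbardString a b) :=
  fun _ _ h => zSetString_injective (spinString_injective_right _ _ h)

lemma smul_PauliMat_hubbardString_mem (hG : G.Connected) {a b : Fin N} (hab : G.Adj a b)
    (T : Finset (Fin N)) : I • PauliMat (hubbardString a b T) ∈ hamAlg (S_Hub N G) := by
  induction T using Finset.induction_on with
  | empty =>
    simpa [hubbardString] using
      smul_PauliMat_mem_hamAlg (spinString_ladderString_zero_mem_S_Hub hab)
  | insert k T hk ih =>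
    refine (hamAlg _).smul_PauliMat_mem_of_isBracketProd ih
      (smul_PauliMat_spinString_ladderString_zString_mem hG hab k) ?_
    have hz := isCommProd_zSetString_zString_insert hk
    by_cases hT : Even T.card
    · simpa [hubbardString, Finset.card_insert_of_notMem hk, Nat.even_add_one, hT] using
        (isBracketProd_ladderString_ladderString a b (by decide) 1).spinString_left hz
    · simpa [hubbardString, Finset.card_insert_of_notMem hk, Nat.even_add_one, hT] using
        (isBracketProd_zString_ladderString a b (by decide) 1).spinString_left hz

lemma two_pow_le_finrank_hamAlg_S_Hub (hG : G.Connected) {a b : Fin N} (hab : G.Adj a b) :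
    2 ^ N ≤ Module.finrank ℝ (hamAlg (S_Hub N G)) := by
  simpa [Fintype.card_finset] using card_le_finrank_of_smul_PauliMat_mem _
    (hubbardString_injective a b) (smul_PauliMat_hubbardString_mem hG hab)

end Hubbard

theorem finrank_hamAlg_Hubbard_ge_general (N : ℕ)
    (G : SimpleGraph (Fin N)) (hG : G.Connected) :
    2 ^ (N - 1) ≤ Module.finrank ℝ (hamAlg (S_Hub N G)) := by
  obtain ⟨a⟩ := hG.nonempty
  rcases le_or_gt N 1 with hN | hN
  · rw [Nat.sub_eq_zero_of_le hN, pow_zero]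
    simpa using card_le_finrank_of_smul_PauliMat_mem (ι := Unit) _
      (f := fun _ => spinString (zString a) (zString a)) (fun _ _ _ => rfl)
      fun _ => smul_PauliMat_mem_hamAlg (spinString_zString_zString_mem_S_Hub a)
  · have : Nontrivial (Fin N) := Fin.nontrivial_iff_two_le.mpr hN
    obtain ⟨b, hab⟩ := hG.preconnected.exists_adj_of_nontrivial a
    calc 2 ^ (N - 1) ≤ 2 ^ N := Nat.pow_le_pow_right two_pos (Nat.sub_le N 1)
      _ ≤ _ := two_pow_le_finrank_hamAlg_S_Hub hG hab

/-- The Hamiltonian algebra of the Hubbard model on a connected graph has dimension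
at least `2^(N−1)`. -/
theorem finrank_hamAlg_Hubbard_ge (N : ℕ) (hN : 1 ≤ N)
    (G : SimpleGraph (Fin N)) (hG : G.Connected) :
    2 ^ (N - 1) ≤ Module.finrank ℝ (hamAlg (S_Hub N G)) :=
  finrank_hamAlg_Hubbard_ge_general N G hG
end

section
/- Exceptional interacting model with polynomial Hamiltonian algebra: fix N ≥ 2 and work with 2N qubits. Let S_X = {the Pauli string with X at qubits i and i+1 and identity elsewhere : 0 ≤ i ≤ N−2} ∪ {the Pauli string with X at qubits N+i and N+i+1 and identity elsewhere : 0 ≤ i ≤ N−2} ∪ {Z_0Z_N}. Then the Hamiltonian algebra g(S_X) is contained in the ℝ-linear span of the 2N+2 matrices {Complex.I • P(q)} for q ranging over the Pauli strings {X at i, i+1 : 0 ≤ i ≤ N−2} ∪ {X at N+i, N+i+1 : 0 ≤ i ≤ N−2} ∪ {Z_0Z_N} ∪ {Y at 0, X at 1, Z at N} ∪ {Z at 0, Y at N, X at N+1} ∪ {Y at 0, X at 1, Y at N, X at N+1}; in particular dim g(S_X) ≤ 2N+2, so despite the interaction term Z_0Z_N the dimension grows only linearly with N. -/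
open Matrix

attribute [local instance 100] LieRing.ofAssociativeRing

/-- The Pauli string with `X` at positions `i` and `i+1`, identity elsewhere. -/
def xxString {M : ℕ} (i : ℕ) : Fin M → Fin 4 :=
  fun m => if m.val = i ∨ m.val = i + 1 then 1 else 0

/-- The Pauli string `Y_0 X_1 Z_N` on `2N` qubits. -/
def yxzString (N : ℕ) : Fin (2 * N) → Fin 4 :=
  fun m => if m.val = 0 then 2 else if m.val = 1 then 1 else
    if m.val = N then 3 else 0

/-- The Pauli string `Z_0 Y_N X_{N+1}` on `2N` qubits. -/
def zyxString (N : ℕ) : Fin (2 * N) → Fin 4 :=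
  fun m => if m.val = 0 then 3 else if m.val = N then 2 else
    if m.val = N + 1 then 1 else 0

/-- The Pauli string `Y_0 X_1 Y_N X_{N+1}` on `2N` qubits. -/
def yxyxString (N : ℕ) : Fin (2 * N) → Fin 4 :=
  fun m => if m.val = 0 then 2 else if m.val = 1 then 1 else
    if m.val = N then 2 else if m.val = N + 1 then 1 else 0

/-- The generating set `S_X`: `X_iX_{i+1}` for `0 ≤ i ≤ N−2` for both spin species,
plus the interaction string `Z_0 Z_N`. -/
def S_X (N : ℕ) (hN : 2 ≤ N) : Set (Fin (2 * N) → Fin 4) :=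
  {p | ∃ i : ℕ, i + 2 ≤ N ∧ (p = xxString i ∨ p = xxString (N + i))} ∪
  {zzString (⟨0, by omega⟩ : Fin (2 * N)) ⟨N, by omega⟩}

/-- The spanning set of `2N + 2` Pauli strings containing `g(S_X)`. -/
def Q_X (N : ℕ) (hN : 2 ≤ N) : Set (Fin (2 * N) → Fin 4) :=
  {p | ∃ i : ℕ, i + 2 ≤ N ∧ (p = xxString i ∨ p = xxString (N + i))} ∪
  {zzString (⟨0, by omega⟩ : Fin (2 * N)) ⟨N, by omega⟩,
   yxzString N, zyxString N, yxyxString N}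

/-!
`P(p) P(q)` is a phase times `P(pq)`, where `pq` is the sitewise product of letters, and the
phase is real when `p` and `q` anticommute at an even number of sites. Hence the bracket of
`I • P(p)` and `I • P(q)` is either zero or a real multiple of `I • P(pq)`, and the real span of
the `I • P(q)`, `q ∈ Q`, is a Lie subalgebra as soon as every pair of strings in `Q` commutes or
has its product in `Q`. It then contains `g(S)` for every `S ⊆ Q`, so `dim g(S) ≤ |Q|`.

For `Q = Q_X`, all `Y` and `Z` letters sit at sites `0` and `N`, so a hopping `X_kX_{k+1}` that
avoids both commutes with all of `Q_X`. The six remaining strings live on the four sites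
`0, 1, N, N + 1`, where their closure is a finite check.
-/

namespace Pauli

open Function

def letterMul (a b : Fin 4) : Fin 4 :=
  ![![0, 1, 2, 3], ![1, 0, 3, 2], ![2, 3, 0, 1], ![3, 2, 1, 0]] a b

noncomputable def phase (a b : Fin 4) : ℂ :=
  ![![1, 1, 1, 1], ![1, 1, Complex.I, -Complex.I],
    ![1, -Complex.I, 1, Complex.I], ![1, Complex.I, -Complex.I, 1]] a b

def LettersAnticommute (a b : Fin 4) : Prop := a ≠ 0 ∧ b ≠ 0 ∧ a ≠ b

instance : DecidableRel LettersAnticommute := fun a b =>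
  inferInstanceAs (Decidable (a ≠ 0 ∧ b ≠ 0 ∧ a ≠ b))

lemma letterMul_comm (a b : Fin 4) : letterMul a b = letterMul b a := by
  revert a b; decide

lemma phase_swap (a b : Fin 4) : phase b a = starRingEnd ℂ (phase a b) := by
  fin_cases a <;> fin_cases b <;> simp [phase]

lemma phase_sq (a b : Fin 4) :
    phase a b ^ 2 = if LettersAnticommute a b then -1 else 1 := by
  fin_cases a <;> fin_cases b <;> simp [phase, LettersAnticommute, sq]

lemma pauli_mul_pauli (a b : Fin 4) :
    pauli a * pauli b = phase a b • pauli (letterMul a b) := by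
  fin_cases a <;> fin_cases b <;>
    · ext i j
      fin_cases i <;> fin_cases j <;>
        simp [pauli, phase, letterMul, Matrix.mul_apply, Fin.sum_univ_two]

section Strings

variable {ι κ : Type*}

def mul (p q : ι → Fin 4) : ι → Fin 4 := fun i => letterMul (p i) (q i)

protected lemma mul_comm (p q : ι → Fin 4) : mul p q = mul q p :=
  funext fun _ => letterMul_comm _ _

lemma mul_extend {e : ι → κ} (he : Injective e) (p q : ι → Fin 4) :
    mul (extend e p 0) (extend e q 0) = extend e (mul p q) 0 := by
  funext m
  by_cases hm : ∃ i, e i = m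
  · obtain ⟨i, rfl⟩ := hm
    simp only [mul, he.extend_apply]
  · simp only [mul, extend_apply' _ _ _ hm]
    rfl

variable [Fintype ι]

def anticommutingSites (p q : ι → Fin 4) : Finset ι :=
  {i | LettersAnticommute (p i) (q i)}

@[simp]
lemma mem_anticommutingSites {p q : ι → Fin 4} {i : ι} :
    i ∈ anticommutingSites p q ↔ LettersAnticommute (p i) (q i) := by
  simp [anticommutingSites]

lemma anticommutingSites_comm (p q : ι → Fin 4) :
    anticommutingSites p q = anticommutingSites q p := by
  ext i
  simp only [mem_anticommutingSites, LettersAnticommute]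
  tauto

lemma anticommutingSites_extend [Fintype κ] {e : ι → κ} (he : Injective e) (p q : ι → Fin 4) :
    anticommutingSites (extend e p 0) (extend e q 0) =
      (anticommutingSites p q).map ⟨e, he⟩ := by
  ext m
  by_cases hm : ∃ i, e i = m
  · obtain ⟨i, rfl⟩ := hm
    simp [he.extend_apply]
  · simp only [mem_anticommutingSites, extend_apply' _ _ _ hm, Finset.mem_map,
      Embedding.coeFn_mk, LettersAnticommute]
    simp_all

lemma prod_phase_sq (p q : ι → Fin 4) :
    (∏ i, phase (p i) (q i)) ^ 2 = (-1) ^ (anticommutingSites p q).card := by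
  simp only [← Finset.prod_pow, phase_sq, Finset.prod_ite, Finset.prod_const_one, mul_one,
    Finset.prod_const, anticommutingSites]

lemma im_prod_phase_eq_zero {p q : ι → Fin 4} (h : Even (anticommutingSites p q).card) :
    (∏ i, phase (p i) (q i)).im = 0 := by
  have hsq := prod_phase_sq p q
  rw [h.neg_one_pow, sq_eq_one_iff] at hsq
  rcases hsq with h1 | h1 <;> simp [h1]

def ProductClosed (Q : Set (ι → Fin 4)) : Prop :=
  ∀ p ∈ Q, ∀ q ∈ Q, Even (anticommutingSites p q).card ∨ mul p q ∈ Q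

lemma ProductClosed.image_extend [Fintype κ] {Q : Set (ι → Fin 4)} (hQ : ProductClosed Q)
    {e : ι → κ} (he : Injective e) : ProductClosed ((fun p => extend e p 0) '' Q) := by
  rintro _ ⟨p, hp, rfl⟩ _ ⟨q, hq, rfl⟩
  rw [anticommutingSites_extend he, Finset.card_map, mul_extend he]
  exact (hQ p hp q hq).imp_right (Set.mem_image_of_mem _)

end Strings

section Matrices

variable {n : ℕ}

lemma PauliMat_mul (p q : Fin n → Fin 4) :
    PauliMat p * PauliMat q = (∏ i, phase (p i) (q i)) • PauliMat (mul p q) := by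
  ext x y
  have hsite (i : Fin n) : ∑ t, pauli (p i) (x i) t * pauli (q i) t (y i)
      = phase (p i) (q i) * pauli (letterMul (p i) (q i)) (x i) (y i) := by
    simpa [Matrix.mul_apply] using
      congrFun (congrFun (pauli_mul_pauli (p i) (q i)) (x i)) (y i)
  calc (PauliMat p * PauliMat q) x y
      = ∑ z : Fin n → Fin 2, ∏ i, pauli (p i) (x i) (z i) * pauli (q i) (z i) (y i) := by
        simp [PauliMat, Matrix.mul_apply, Finset.prod_mul_distrib]
    _ = ∏ i, ∑ t, pauli (p i) (x i) t * pauli (q i) t (y i) := by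
        rw [Finset.prod_univ_sum, Fintype.piFinset_univ]
    _ = _ := by simp [hsite, Finset.prod_mul_distrib, PauliMat, mul]

lemma lie_I_smul_PauliMat (p q : Fin n → Fin 4) :
    ⁅Complex.I • PauliMat p, Complex.I • PauliMat q⁆
      = (-2 * (∏ i, phase (p i) (q i)).im : ℝ) • (Complex.I • PauliMat (mul p q)) := by
  have hconj : ∏ i, phase (q i) (p i) = starRingEnd ℂ (∏ i, phase (p i) (q i)) := by
    rw [map_prod]
    exact Finset.prod_congr rfl fun i _ => phase_swap _ _
  rw [Ring.lie_def, smul_mul_smul_comm, smul_mul_smul_comm, PauliMat_mul, PauliMat_mul,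
    Pauli.mul_comm q p, hconj, smul_smul, smul_smul, ← sub_smul, ← smul_assoc]
  congr 1
  generalize ∏ i, phase (p i) (q i) = z
  apply Complex.ext <;> simp; ring

lemma lie_I_smul_PauliMat_eq_zero {p q : Fin n → Fin 4}
    (h : Even (anticommutingSites p q).card) :
    ⁅Complex.I • PauliMat p, Complex.I • PauliMat q⁆ = 0 := by
  rw [lie_I_smul_PauliMat, im_prod_phase_eq_zero h]
  simp

noncomputable abbrev span (Q : Set (Fin n → Fin 4)) :
    Submodule ℝ (Matrix (Fin n → Fin 2) (Fin n → Fin 2) ℂ) :=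
  Submodule.span ℝ ((fun p => Complex.I • PauliMat p) '' Q)

lemma lie_mem_span {Q : Set (Fin n → Fin 4)} (hQ : ProductClosed Q) {x y}
    (hx : x ∈ span Q) (hy : y ∈ span Q) : ⁅x, y⁆ ∈ span Q := by
  induction hx, hy using Submodule.span_induction₂ with
  | mem_mem _ _ hx hy =>
    obtain ⟨p, hp, rfl⟩ := hx
    obtain ⟨q, hq, rfl⟩ := hy
    rcases hQ p hp q hq with heven | hmul
    · rw [lie_I_smul_PauliMat_eq_zero heven]
      exact zero_mem _
    · rw [lie_I_smul_PauliMat]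
      exact Submodule.smul_mem _ _ (Submodule.subset_span ⟨_, hmul, rfl⟩)
  | zero_left => rw [zero_lie]; exact zero_mem _
  | zero_right => rw [lie_zero]; exact zero_mem _
  | add_left _ _ _ _ _ _ h₁ h₂ => rw [add_lie]; exact add_mem h₁ h₂
  | add_right _ _ _ _ _ _ h₁ h₂ => rw [lie_add]; exact add_mem h₁ h₂
  | smul_left _ _ _ _ _ h => rw [smul_lie]; exact Submodule.smul_mem _ _ h
  | smul_right _ _ _ _ _ h => rw [lie_smul]; exact Submodule.smul_mem _ _ h

lemma hamAlg_le_span {S Q : Set (Fin n → Fin 4)} (hSQ : S ⊆ Q) (hQ : ProductClosed Q) :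
    (hamAlg S).toSubmodule ≤ span Q := by
  let L : LieSubalgebra ℝ (Matrix (Fin n → Fin 2) (Fin n → Fin 2) ℂ) :=
    { span Q with lie_mem' := lie_mem_span hQ }
  change hamAlg S ≤ L
  exact LieSubalgebra.lieSpan_le.mpr ((Set.image_mono hSQ).trans Submodule.subset_span)

lemma finrank_span_le_ncard (Q : Set (Fin n → Fin 4)) :
    Module.finrank ℝ (span Q) ≤ Q.ncard := by
  classical
  calc Module.finrank ℝ (span Q)
      ≤ ((fun p => Complex.I • PauliMat p) '' Q).toFinset.card := finrank_span_le_card _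
    _ = ((fun p => Complex.I • PauliMat p) '' Q).ncard := (Set.ncard_eq_toFinset_card' _).symm
    _ ≤ Q.ncard := Set.ncard_image_le

lemma finrank_hamAlg_le_ncard {S Q : Set (Fin n → Fin 4)} (hSQ : S ⊆ Q)
    (hQ : ProductClosed Q) : Module.finrank ℝ (hamAlg S) ≤ Q.ncard :=
  (Submodule.finrank_mono (hamAlg_le_span hSQ hQ)).trans (finrank_span_le_ncard Q)

end Matrices

end Pauli

open Pauli Function

def junctionSite (N : ℕ) (hN : 2 ≤ N) : Fin 4 → Fin (2 * N) :=
  ![⟨0, by omega⟩, ⟨1, by omega⟩, ⟨N, by omega⟩, ⟨N + 1, by omega⟩]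

lemma junctionSite_injective (N : ℕ) (hN : 2 ≤ N) : Injective (junctionSite N hN) := by
  intro a b h
  fin_cases a <;> fin_cases b <;> simp_all [junctionSite, Fin.ext_iff] <;> omega

lemma extend_junctionSite_apply (N : ℕ) (hN : 2 ≤ N) (t : Fin 4 → Fin 4) (m : Fin (2 * N)) :
    extend (junctionSite N hN) t 0 m =
      if m.val = 0 then t 0 else if m.val = 1 then t 1 else if m.val = N then t 2
      else if m.val = N + 1 then t 3 else 0 := by
  have hsite (j : Fin 4) (hj : (junctionSite N hN j).val = m.val) :
      extend (junctionSite N hN) t 0 m = t j := by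
    rw [← Fin.ext hj, (junctionSite_injective N hN).extend_apply]
  split_ifs with h0 h1 h2 h3
  · exact hsite 0 h0.symm
  · exact hsite 1 h1.symm
  · exact hsite 2 h2.symm
  · exact hsite 3 h3.symm
  · refine extend_apply' _ _ _ ?_
    rintro ⟨j, rfl⟩
    fin_cases j <;> simp_all [junctionSite]

def junctionStrings : Finset (Fin 4 → Fin 4) :=
  {![1, 1, 0, 0], ![0, 0, 1, 1], ![3, 0, 3, 0], ![2, 1, 3, 0], ![3, 0, 2, 1], ![2, 1, 2, 1]}

lemma productClosed_junctionStrings :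
    ProductClosed (junctionStrings : Set (Fin 4 → Fin 4)) := by
  unfold ProductClosed
  simp only [Finset.mem_coe]
  decide +kernel

lemma image_extend_junctionStrings (N : ℕ) (hN : 2 ≤ N) :
    (fun t => extend (junctionSite N hN) t 0) '' junctionStrings =
      {xxString 0, xxString N, zzString (⟨0, by omega⟩ : Fin (2 * N)) ⟨N, by omega⟩,
        yxzString N, zyxString N, yxyxString N} := by
  simp only [junctionStrings, Finset.coe_insert, Finset.coe_singleton, Set.image_insert_eq,
    Set.image_singleton]
  congr! 6 <;> funext m <;>
    simp only [extend_junctionSite_apply, xxString, zzString, yxzString, zyxString, yxyxString,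
      Fin.ext_iff] <;>
    split_ifs <;> first | rfl | omega

lemma Q_X_apply_eq_zero_or_one {N : ℕ} {hN : 2 ≤ N} {q : Fin (2 * N) → Fin 4}
    (hq : q ∈ Q_X N hN) {m : Fin (2 * N)} (hm0 : m.val ≠ 0) (hmN : m.val ≠ N) :
    q m = 0 ∨ q m = 1 := by
  rcases hq with ⟨i, -, rfl | rfl⟩ | rfl | rfl | rfl | rfl <;>
    simp only [xxString, zzString, yxzString, zyxString, yxyxString, Fin.ext_iff] <;>
    split_ifs <;> simp_all

lemma anticommutingSites_xxString_eq_empty {N : ℕ} {hN : 2 ≤ N} {k : ℕ} (hk0 : k ≠ 0)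
    (hkN : k ≠ N) (hk1 : k + 1 ≠ N) {q : Fin (2 * N) → Fin 4} (hq : q ∈ Q_X N hN) :
    anticommutingSites (xxString k) q = ∅ := by
  ext m
  simp only [mem_anticommutingSites, LettersAnticommute, Finset.notMem_empty, iff_false]
  rintro ⟨hp, hq0, hpq⟩
  have hm : m.val = k ∨ m.val = k + 1 := by
    by_contra h
    exact hp (if_neg h)
  have hxx : xxString k m = 1 := if_pos hm
  rcases Q_X_apply_eq_zero_or_one hq (m := m) (by omega) (by omega) with h | h
  exacts [hq0 h, hpq (hxx.trans h.symm)]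

lemma Q_X_mem_cases {N : ℕ} {hN : 2 ≤ N} {p : Fin (2 * N) → Fin 4} (hp : p ∈ Q_X N hN) :
    p ∈ (fun t => extend (junctionSite N hN) t 0) '' junctionStrings ∨
      ∃ k, k ≠ 0 ∧ k ≠ N ∧ k + 1 ≠ N ∧ p = xxString k := by
  rw [image_extend_junctionStrings]
  rcases hp with ⟨i, hi, rfl | rfl⟩ | hp
  · rcases Nat.eq_zero_or_pos i with rfl | hi0
    · simp
    · exact Or.inr ⟨i, by omega, by omega, by omega, rfl⟩
  · rcases Nat.eq_zero_or_pos i with rfl | hi0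
    · simp
    · exact Or.inr ⟨N + i, by omega, by omega, by omega, rfl⟩
  · left
    simp_all

lemma productClosed_Q_X (N : ℕ) (hN : 2 ≤ N) : ProductClosed (Q_X N hN) := by
  have hJ := productClosed_junctionStrings.image_extend (junctionSite_injective N hN)
  have hJQ : (fun t => extend (junctionSite N hN) t 0) '' junctionStrings ⊆ Q_X N hN := by
    rw [image_extend_junctionStrings]
    rintro _ (rfl | rfl | rfl | h)
    · exact Or.inl ⟨0, hN, Or.inl rfl⟩
    · exact Or.inl ⟨0, hN, Or.inr rfl⟩
    · exact Or.inr (Or.inl rfl)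
    · exact Or.inr (Or.inr h)
  intro p hp q hq
  rcases Q_X_mem_cases hp with hpJ | ⟨k, hk0, hkN, hk1, rfl⟩
  · rcases Q_X_mem_cases hq with hqJ | ⟨k, hk0, hkN, hk1, rfl⟩
    · exact (hJ p hpJ q hqJ).imp_right (hJQ ·)
    · left
      rw [anticommutingSites_comm, anticommutingSites_xxString_eq_empty hk0 hkN hk1 hp]
      simp
  · left
    rw [anticommutingSites_xxString_eq_empty hk0 hkN hk1 hq]
    simp

lemma ncard_Q_X_le (N : ℕ) (hN : 2 ≤ N) : (Q_X N hN).ncard ≤ 2 * N + 2 := by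
  classical
  let F : Finset (Fin (2 * N) → Fin 4) :=
    (Finset.range (N - 1)).image (fun i => xxString i) ∪
      (Finset.range (N - 1)).image (fun i => xxString (N + i)) ∪
      {zzString (⟨0, by omega⟩ : Fin (2 * N)) ⟨N, by omega⟩, yxzString N, zyxString N,
        yxyxString N}
  have hQF : Q_X N hN ⊆ F := by
    rintro _ (⟨i, hi, rfl | rfl⟩ | h)
    · simp only [F, Finset.coe_union, Finset.coe_image]
      exact Or.inl (Or.inl ⟨i, by simp; omega, rfl⟩)
    · simp only [F, Finset.coe_union, Finset.coe_image]
      exact Or.inl (Or.inr ⟨i, by simp; omega, rfl⟩)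
    · simp only [F, Finset.coe_union, Finset.coe_insert, Finset.coe_singleton]
      exact Or.inr h
  calc (Q_X N hN).ncard ≤ F.card := (Set.ncard_le_ncard hQF).trans (Set.ncard_coe_finset F).le
    _ ≤ (N - 1) + (N - 1) + 4 := by
      refine (Finset.card_union_le _ _).trans (add_le_add ((Finset.card_union_le _ _).trans
        (add_le_add ?_ ?_)) Finset.card_le_four) <;>
      exact Finset.card_image_le.trans (Finset.card_range _).le
    _ = 2 * N + 2 := by omega

lemma S_X_subset_Q_X (N : ℕ) (hN : 2 ≤ N) : S_X N hN ⊆ Q_X N hN :=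
  Set.union_subset_union_right _ (Set.singleton_subset_iff.mpr (Set.mem_insert _ _))

/-- The exceptional interacting model: despite the interaction term `Z_0 Z_N`, the
Hamiltonian algebra `g(S_X)` is contained in the ℝ-linear span of `2N + 2` Pauli
strings, so its dimension is at most `2N + 2`, linear in `N`. -/
theorem hamAlg_SX_polynomial (N : ℕ) (hN : 2 ≤ N) :
    (∀ x ∈ hamAlg (S_X N hN),
      x ∈ Submodule.span ℝ ((fun p => Complex.I • PauliMat p) '' Q_X N hN)) ∧
    Module.finrank ℝ (hamAlg (S_X N hN)) ≤ 2 * N + 2 :=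
  ⟨fun _ hx => hamAlg_le_span (S_X_subset_Q_X N hN) (productClosed_Q_X N hN) hx,
    (finrank_hamAlg_le_ncard (S_X_subset_Q_X N hN) (productClosed_Q_X N hN)).trans
      (ncard_Q_X_le N hN)⟩
end
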